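/- Let U ⊆ {(x, y) ∈ ℝ² : x ≠ 0} be open and let f : ℝ² → ℝ be smooth on U. Define the operators L₁ f = ∂ₓ² f − (2/x)·∂ₓ f + ∂_y² f, M₁ f = ∂ₓ³ f − (3/x)·∂ₓ² f + (3/x²)·∂ₓ f, and K₁ f = ∂_y² f. Then the three operators pairwise commute on U: L₁(M₁ f) = M₁(L₁ f), L₁(K₁ f) = K₁(L₁ f), and M₁(K₁ f) = K₁(M₁ f). -/

import Mathlib

/-- Partial derivative in the first coordinate of a function on `ℝ²`. -/
noncomputable def pdx (f : ℝ × ℝ → ℝ) (p : ℝ × ℝ) : ℝ :=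
  deriv (fun t => f (t, p.2)) p.1

/-- Partial derivative in the second coordinate of a function on `ℝ²`. -/
noncomputable def pdy (f : ℝ × ℝ → ℝ) (p : ℝ × ℝ) : ℝ :=
  deriv (fun t => f (p.1, t)) p.2

/-- `L₁ = ∂ₓ² − (2/x)∂ₓ + ∂_y²`. -/
noncomputable def L1 (f : ℝ × ℝ → ℝ) (p : ℝ × ℝ) : ℝ :=
  pdx (pdx f) p - 2 / p.1 * pdx f p + pdy (pdy f) p

/-- `M₁ = ∂ₓ³ − (3/x)∂ₓ² + (3/x²)∂ₓ`. -/
noncomputable def M1 (f : ℝ × ℝ → ℝ) (p : ℝ × ℝ) : ℝ :=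
  pdx (pdx (pdx f)) p - 3 / p.1 * pdx (pdx f) p + 3 / p.1 ^ 2 * pdx f p

/-- `K₁ = ∂_y²`. -/
noncomputable def K1 (f : ℝ × ℝ → ℝ) (p : ℝ × ℝ) : ℝ :=
  pdy (pdy f) p

/-! ### Auxiliary material -/

open scoped ContDiff
open Set Filter

namespace CommuteAux

lemma le1' : (1 : WithTop ℕ∞) ≤ ∞ := by
  rw [show (1 : WithTop ℕ∞) = ((1 : ℕ∞) : WithTop ℕ∞) from rfl]
  exact WithTop.coe_le_coe.2 le_top

lemma le2' : (2 : WithTop ℕ∞) ≤ ∞ := by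
  rw [show (2 : WithTop ℕ∞) = ((2 : ℕ∞) : WithTop ℕ∞) from rfl]
  exact WithTop.coe_le_coe.2 le_top

lemma leinf : (∞ : WithTop ℕ∞) + 1 ≤ ∞ := le_of_eq rfl

/-! #### One-dimensional derivative computations -/

lemma hd1 (c : ℝ) {x : ℝ} (hx : x ≠ 0) {h : ℝ → ℝ} {h' : ℝ} (hh : HasDerivAt h h' x) :
    HasDerivAt (fun t => c / t * h t) (-(c / x ^ 2) * h x + c / x * h') x := by
  have h2 : HasDerivAt (fun t : ℝ => c / t) (-(c / x ^ 2)) x := by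
    have h3 := ((hasDerivAt_id x).inv hx).const_mul c
    have hfun : (fun y : ℝ => c * (id : ℝ → ℝ)⁻¹ y) = fun t : ℝ => c / t := by
      funext t; simp [div_eq_mul_inv]
    rw [hfun] at h3
    refine h3.congr_deriv ?_; symm; simp only [id]
    field_simp
  exact h2.mul hh

lemma hd2 (c : ℝ) {x : ℝ} (hx : x ≠ 0) {h : ℝ → ℝ} {h' : ℝ} (hh : HasDerivAt h h' x) :
    HasDerivAt (fun t => c / t ^ 2 * h t) (-(2 * c / x ^ 3) * h x + c / x ^ 2 * h') x := by
  have h2 : HasDerivAt (fun t : ℝ => c / t ^ 2) (-(2 * c / x ^ 3)) x := by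
    have h3 := ((hasDerivAt_pow 2 x).inv (pow_ne_zero 2 hx)).const_mul c
    have hfun : (fun y : ℝ => c * (fun x : ℝ => x ^ 2)⁻¹ y) = fun t : ℝ => c / t ^ 2 := by
      funext t; simp [div_eq_mul_inv]
    rw [hfun] at h3
    refine h3.congr_deriv ?_; symm
    norm_num
    field_simp
  exact h2.mul hh

lemma hd3 (c : ℝ) {x : ℝ} (hx : x ≠ 0) {h : ℝ → ℝ} {h' : ℝ} (hh : HasDerivAt h h' x) :
    HasDerivAt (fun t => c / t ^ 3 * h t) (-(3 * c / x ^ 4) * h x + c / x ^ 3 * h') x := by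
  have h2 : HasDerivAt (fun t : ℝ => c / t ^ 3) (-(3 * c / x ^ 4)) x := by
    have h3 := ((hasDerivAt_pow 3 x).inv (pow_ne_zero 3 hx)).const_mul c
    have hfun : (fun y : ℝ => c * (fun x : ℝ => x ^ 3)⁻¹ y) = fun t : ℝ => c / t ^ 3 := by
      funext t; simp [div_eq_mul_inv]
    rw [hfun] at h3
    refine h3.congr_deriv ?_; symm
    norm_num
    field_simp
  exact h2.mul hh

/-- 1-D version of `A₁ = ∂² - (2/x)∂`. -/
noncomputable def a1 (g : ℝ → ℝ) (x : ℝ) : ℝ :=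
  deriv (deriv g) x - 2 / x * deriv g x

/-- 1-D version of `M₁ = ∂³ - (3/x)∂² + (3/x²)∂`. -/
noncomputable def m1 (g : ℝ → ℝ) (x : ℝ) : ℝ :=
  deriv (deriv (deriv g)) x - 3 / x * deriv (deriv g) x + 3 / x ^ 2 * deriv g x

set_option maxHeartbeats 2000000 in
/-- The 1-D operators `a1` and `m1` commute on smooth functions away from `0`. -/
lemma oneD_comm {V : Set ℝ} (hV : IsOpen V) (hV0 : ∀ x ∈ V, x ≠ 0) {g : ℝ → ℝ}
    (hg : ContDiffOn ℝ ∞ g V) : ∀ x ∈ V, a1 (m1 g) x = m1 (a1 g) x := by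
  have h1 : ContDiffOn ℝ ∞ (deriv g) V := hg.deriv_of_isOpen hV leinf
  have h2 : ContDiffOn ℝ ∞ (deriv (deriv g)) V := h1.deriv_of_isOpen hV leinf
  have h3 : ContDiffOn ℝ ∞ (deriv (deriv (deriv g))) V := h2.deriv_of_isOpen hV leinf
  have h4 : ContDiffOn ℝ ∞ (deriv (deriv (deriv (deriv g)))) V := h3.deriv_of_isOpen hV leinf
  have hD : ∀ h : ℝ → ℝ, ContDiffOn ℝ ∞ h V → ∀ y ∈ V, HasDerivAt h (deriv h y) y := by
    intro h hh y hy
    exact (((hh y hy).contDiffAt (hV.mem_nhds hy)).differentiableAt (by simp)).hasDerivAt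
  -- first derivative of m1 g
  have e1 : Set.EqOn (deriv (m1 g))
      (fun y => deriv (deriv (deriv (deriv g))) y - 3 / y * deriv (deriv (deriv g)) y
        + 6 / y ^ 2 * deriv (deriv g) y - 6 / y ^ 3 * deriv g y) V := by
    intro y hy
    have hy0 := hV0 y hy
    refine (((((hD _ h3 y hy).sub (hd1 3 hy0 (hD _ h2 y hy))).add
      (hd2 3 hy0 (hD _ h1 y hy))).deriv).trans ?_)
    field_simp
    ring
  -- second derivative of m1 g
  have e2 : Set.EqOn (deriv (deriv (m1 g)))
      (fun y => deriv (deriv (deriv (deriv (deriv g)))) y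
        - 3 / y * deriv (deriv (deriv (deriv g))) y
        + 9 / y ^ 2 * deriv (deriv (deriv g)) y
        - 18 / y ^ 3 * deriv (deriv g) y + 18 / y ^ 4 * deriv g y) V := by
    intro y hy
    have hy0 := hV0 y hy
    have h5 := (Filter.eventuallyEq_of_mem (hV.mem_nhds hy) e1).deriv_eq
    refine h5.trans ?_
    refine ((((((hD _ h4 y hy).sub (hd1 3 hy0 (hD _ h3 y hy))).add
      (hd2 6 hy0 (hD _ h2 y hy))).sub (hd3 6 hy0 (hD _ h1 y hy))).deriv).trans ?_)
    field_simp
    ring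
  -- first derivative of a1 g
  have b1 : Set.EqOn (deriv (a1 g))
      (fun y => deriv (deriv (deriv g)) y - 2 / y * deriv (deriv g) y
        + 2 / y ^ 2 * deriv g y) V := by
    intro y hy
    have hy0 := hV0 y hy
    refine (((hD _ h2 y hy).sub (hd1 2 hy0 (hD _ h1 y hy))).deriv).trans ?_
    field_simp
    ring
  -- second derivative of a1 g
  have b2 : Set.EqOn (deriv (deriv (a1 g)))
      (fun y => deriv (deriv (deriv (deriv g))) y - 2 / y * deriv (deriv (deriv g)) y
        + 4 / y ^ 2 * deriv (deriv g) y - 4 / y ^ 3 * deriv g y) V := by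
    intro y hy
    have hy0 := hV0 y hy
    have h5 := (Filter.eventuallyEq_of_mem (hV.mem_nhds hy) b1).deriv_eq
    refine h5.trans ?_
    refine (((((hD _ h3 y hy).sub (hd1 2 hy0 (hD _ h2 y hy))).add
      (hd2 2 hy0 (hD _ h1 y hy))).deriv).trans ?_)
    field_simp
    ring
  -- third derivative of a1 g
  have b3 : Set.EqOn (deriv (deriv (deriv (a1 g))))
      (fun y => deriv (deriv (deriv (deriv (deriv g)))) y
        - 2 / y * deriv (deriv (deriv (deriv g))) y
        + 6 / y ^ 2 * deriv (deriv (deriv g)) y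
        - 12 / y ^ 3 * deriv (deriv g) y + 12 / y ^ 4 * deriv g y) V := by
    intro y hy
    have hy0 := hV0 y hy
    have h5 := (Filter.eventuallyEq_of_mem (hV.mem_nhds hy) b2).deriv_eq
    refine h5.trans ?_
    refine ((((((hD _ h4 y hy).sub (hd1 2 hy0 (hD _ h3 y hy))).add
      (hd2 4 hy0 (hD _ h2 y hy))).sub (hd3 4 hy0 (hD _ h1 y hy))).deriv).trans ?_)
    field_simp
    ring
  intro x hx
  have hx0 := hV0 x hx
  show deriv (deriv (m1 g)) x - 2 / x * deriv (m1 g) x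
      = deriv (deriv (deriv (a1 g))) x - 3 / x * deriv (deriv (a1 g)) x
        + 3 / x ^ 2 * deriv (a1 g) x
  rw [e2 hx, e1 hx, b3 hx, b2 hx, b1 hx]
  field_simp
  ring

/-! #### Two-dimensional partial-derivative machinery -/

lemma sliceX_hasDerivAt {f : ℝ × ℝ → ℝ} {q : ℝ × ℝ} (hf : DifferentiableAt ℝ f q) :
    HasDerivAt (fun t => f (t, q.2)) (fderiv ℝ f q (1, 0)) q.1 := by
  have h1 : HasDerivAt (fun t : ℝ => (t, q.2)) ((1 : ℝ), (0 : ℝ)) q.1 :=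
    (hasDerivAt_id q.1).prodMk (hasDerivAt_const q.1 q.2)
  have h2 : HasFDerivAt f (fderiv ℝ f q) (q.1, q.2) := hf.hasFDerivAt
  exact h2.comp_hasDerivAt q.1 h1

lemma sliceY_hasDerivAt {f : ℝ × ℝ → ℝ} {q : ℝ × ℝ} (hf : DifferentiableAt ℝ f q) :
    HasDerivAt (fun t => f (q.1, t)) (fderiv ℝ f q (0, 1)) q.2 := by
  have h1 : HasDerivAt (fun t : ℝ => (q.1, t)) ((0 : ℝ), (1 : ℝ)) q.2 :=
    (hasDerivAt_const q.2 q.1).prodMk (hasDerivAt_id q.2)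
  have h2 : HasFDerivAt f (fderiv ℝ f q) (q.1, q.2) := hf.hasFDerivAt
  exact h2.comp_hasDerivAt q.2 h1

lemma pdx_eq_fderiv {f : ℝ × ℝ → ℝ} {q : ℝ × ℝ} (hf : DifferentiableAt ℝ f q) :
    pdx f q = fderiv ℝ f q (1, 0) := (sliceX_hasDerivAt hf).deriv

lemma pdy_eq_fderiv {f : ℝ × ℝ → ℝ} {q : ℝ × ℝ} (hf : DifferentiableAt ℝ f q) :
    pdy f q = fderiv ℝ f q (0, 1) := (sliceY_hasDerivAt hf).deriv

lemma mem_diffAt {U : Set (ℝ × ℝ)} (hU : IsOpen U) {g : ℝ × ℝ → ℝ}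
    (hg : ContDiffOn ℝ ∞ g U) {p : ℝ × ℝ} (hp : p ∈ U) : DifferentiableAt ℝ g p :=
  ((hg p hp).contDiffAt (hU.mem_nhds hp)).differentiableAt (by simp)

lemma contDiffOn_pdx {U : Set (ℝ × ℝ)} (hU : IsOpen U) {g : ℝ × ℝ → ℝ}
    (hg : ContDiffOn ℝ ∞ g U) : ContDiffOn ℝ ∞ (pdx g) U := by
  have h1 : ContDiffOn ℝ ∞ (fun q => fderiv ℝ g q (1, 0)) U :=
    (hg.fderiv_of_isOpen hU (le_of_eq rfl)).clm_apply contDiffOn_const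
  exact h1.congr fun q hq => pdx_eq_fderiv (mem_diffAt hU hg hq)

lemma contDiffOn_pdy {U : Set (ℝ × ℝ)} (hU : IsOpen U) {g : ℝ × ℝ → ℝ}
    (hg : ContDiffOn ℝ ∞ g U) : ContDiffOn ℝ ∞ (pdy g) U := by
  have h1 : ContDiffOn ℝ ∞ (fun q => fderiv ℝ g q (0, 1)) U :=
    (hg.fderiv_of_isOpen hU (le_of_eq rfl)).clm_apply contDiffOn_const
  exact h1.congr fun q hq => pdy_eq_fderiv (mem_diffAt hU hg hq)

lemma pdx_congrOn {U : Set (ℝ × ℝ)} (hU : IsOpen U) {g h : ℝ × ℝ → ℝ}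
    (hgh : EqOn g h U) : EqOn (pdx g) (pdx h) U := by
  intro p hp
  have hop : IsOpen {t : ℝ | (t, p.2) ∈ U} :=
    hU.preimage (continuous_id.prodMk continuous_const)
  have hmem : {t : ℝ | (t, p.2) ∈ U} ∈ nhds p.1 := hop.mem_nhds hp
  exact Filter.EventuallyEq.deriv_eq (eventuallyEq_of_mem hmem fun t ht => hgh ht)

lemma pdy_congrOn {U : Set (ℝ × ℝ)} (hU : IsOpen U) {g h : ℝ × ℝ → ℝ}
    (hgh : EqOn g h U) : EqOn (pdy g) (pdy h) U := by
  intro p hp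
  have hop : IsOpen {t : ℝ | (p.1, t) ∈ U} :=
    hU.preimage (continuous_const.prodMk continuous_id)
  have hmem : {t : ℝ | (p.1, t) ∈ U} ∈ nhds p.2 := hop.mem_nhds hp
  exact Filter.EventuallyEq.deriv_eq (eventuallyEq_of_mem hmem fun t ht => hgh ht)

lemma pdx_addOn {U : Set (ℝ × ℝ)} (hU : IsOpen U) {g h : ℝ × ℝ → ℝ}
    (hg : ContDiffOn ℝ ∞ g U) (hh : ContDiffOn ℝ ∞ h U) :
    EqOn (pdx (fun q => g q + h q)) (fun q => pdx g q + pdx h q) U := fun _ hp =>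
  deriv_add (sliceX_hasDerivAt (mem_diffAt hU hg hp)).differentiableAt
    (sliceX_hasDerivAt (mem_diffAt hU hh hp)).differentiableAt

lemma pdy_addOn {U : Set (ℝ × ℝ)} (hU : IsOpen U) {g h : ℝ × ℝ → ℝ}
    (hg : ContDiffOn ℝ ∞ g U) (hh : ContDiffOn ℝ ∞ h U) :
    EqOn (pdy (fun q => g q + h q)) (fun q => pdy g q + pdy h q) U := fun _ hp =>
  deriv_add (sliceY_hasDerivAt (mem_diffAt hU hg hp)).differentiableAt
    (sliceY_hasDerivAt (mem_diffAt hU hh hp)).differentiableAt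

lemma pdy_subOn {U : Set (ℝ × ℝ)} (hU : IsOpen U) {g h : ℝ × ℝ → ℝ}
    (hg : ContDiffOn ℝ ∞ g U) (hh : ContDiffOn ℝ ∞ h U) :
    EqOn (pdy (fun q => g q - h q)) (fun q => pdy g q - pdy h q) U := fun _ hp =>
  deriv_sub (sliceY_hasDerivAt (mem_diffAt hU hg hp)).differentiableAt
    (sliceY_hasDerivAt (mem_diffAt hU hh hp)).differentiableAt

lemma pdy_cmulOn {U : Set (ℝ × ℝ)} (hU : IsOpen U) (c : ℝ → ℝ) {g : ℝ × ℝ → ℝ}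
    (hg : ContDiffOn ℝ ∞ g U) :
    EqOn (pdy (fun q => c q.1 * g q)) (fun q => c q.1 * pdy g q) U := fun p hp =>
  deriv_const_mul (c p.1) (sliceY_hasDerivAt (mem_diffAt hU hg hp)).differentiableAt

lemma pdx_fderivApply {U : Set (ℝ × ℝ)} (hU : IsOpen U) {g : ℝ × ℝ → ℝ}
    (hg : ContDiffOn ℝ ∞ g U) (v : ℝ × ℝ) {p : ℝ × ℝ} (hp : p ∈ U) :
    pdx (fun q => fderiv ℝ g q v) p = fderiv ℝ (fderiv ℝ g) p ((1 : ℝ), (0 : ℝ)) v := by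
  have hfd : ContDiffOn ℝ ∞ (fderiv ℝ g) U := hg.fderiv_of_isOpen hU (le_of_eq rfl)
  have hdfd : DifferentiableAt ℝ (fderiv ℝ g) p :=
    ((hfd p hp).contDiffAt (hU.mem_nhds hp)).differentiableAt (by simp)
  have hda : DifferentiableAt ℝ (fun q => fderiv ℝ g q v) p :=
    hdfd.clm_apply (differentiableAt_const v)
  have h1 : pdx (fun q => fderiv ℝ g q v) p = fderiv ℝ (fun q => fderiv ℝ g q v) p (1, 0) :=
    pdx_eq_fderiv hda
  rw [h1, fderiv_clm_apply hdfd (differentiableAt_const v)]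
  simp

lemma pdy_fderivApply {U : Set (ℝ × ℝ)} (hU : IsOpen U) {g : ℝ × ℝ → ℝ}
    (hg : ContDiffOn ℝ ∞ g U) (v : ℝ × ℝ) {p : ℝ × ℝ} (hp : p ∈ U) :
    pdy (fun q => fderiv ℝ g q v) p = fderiv ℝ (fderiv ℝ g) p ((0 : ℝ), (1 : ℝ)) v := by
  have hfd : ContDiffOn ℝ ∞ (fderiv ℝ g) U := hg.fderiv_of_isOpen hU (le_of_eq rfl)
  have hdfd : DifferentiableAt ℝ (fderiv ℝ g) p :=
    ((hfd p hp).contDiffAt (hU.mem_nhds hp)).differentiableAt (by simp)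
  have hda : DifferentiableAt ℝ (fun q => fderiv ℝ g q v) p :=
    hdfd.clm_apply (differentiableAt_const v)
  have h1 : pdy (fun q => fderiv ℝ g q v) p = fderiv ℝ (fun q => fderiv ℝ g q v) p (0, 1) :=
    pdy_eq_fderiv hda
  rw [h1, fderiv_clm_apply hdfd (differentiableAt_const v)]
  simp

/-- Clairaut swap of one `pdx` past one `pdy` on an open set. -/
lemma swapOn {U : Set (ℝ × ℝ)} (hU : IsOpen U) {g : ℝ × ℝ → ℝ}
    (hg : ContDiffOn ℝ ∞ g U) : EqOn (pdy (pdx g)) (pdx (pdy g)) U := by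
  intro p hp
  have hx : EqOn (pdx g) (fun q => fderiv ℝ g q (1, 0)) U :=
    fun q hq => pdx_eq_fderiv (mem_diffAt hU hg hq)
  have hy : EqOn (pdy g) (fun q => fderiv ℝ g q (0, 1)) U :=
    fun q hq => pdy_eq_fderiv (mem_diffAt hU hg hq)
  have hsym : IsSymmSndFDerivAt ℝ g p :=
    ((hg p hp).contDiffAt (hU.mem_nhds hp)).isSymmSndFDerivAt (by simpa using le2')
  calc pdy (pdx g) p = pdy (fun q => fderiv ℝ g q (1, 0)) p := pdy_congrOn hU hx hp
    _ = fderiv ℝ (fderiv ℝ g) p ((0 : ℝ), (1 : ℝ)) (1, 0) := pdy_fderivApply hU hg _ hp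
    _ = fderiv ℝ (fderiv ℝ g) p ((1 : ℝ), (0 : ℝ)) (0, 1) := (hsym _ _).symm
    _ = pdx (fun q => fderiv ℝ g q (0, 1)) p := (pdx_fderivApply hU hg _ hp).symm
    _ = pdx (pdy g) p := (pdx_congrOn hU hy hp).symm

/-- Swap `pdy ∘ pdy` past one `pdx`. -/
lemma swapY2On {U : Set (ℝ × ℝ)} (hU : IsOpen U) {g : ℝ × ℝ → ℝ}
    (hg : ContDiffOn ℝ ∞ g U) :
    EqOn (pdy (pdy (pdx g))) (pdx (pdy (pdy g))) U :=
  (pdy_congrOn hU (swapOn hU hg)).trans (swapOn hU (contDiffOn_pdy hU hg))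

/-- Swap `pdy ∘ pdy` past `pdx ∘ pdx`. -/
lemma swapY2X2On {U : Set (ℝ × ℝ)} (hU : IsOpen U) {g : ℝ × ℝ → ℝ}
    (hg : ContDiffOn ℝ ∞ g U) :
    EqOn (pdy (pdy (pdx (pdx g)))) (pdx (pdx (pdy (pdy g)))) U :=
  (swapY2On hU (contDiffOn_pdx hU hg)).trans (pdx_congrOn hU (swapY2On hU hg))

/-- Swap `pdy ∘ pdy` past `pdx ∘ pdx ∘ pdx`. -/
lemma swapY2X3On {U : Set (ℝ × ℝ)} (hU : IsOpen U) {g : ℝ × ℝ → ℝ}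
    (hg : ContDiffOn ℝ ∞ g U) :
    EqOn (pdy (pdy (pdx (pdx (pdx g))))) (pdx (pdx (pdx (pdy (pdy g))))) U :=
  (swapY2On hU (contDiffOn_pdx hU (contDiffOn_pdx hU hg))).trans
    (pdx_congrOn hU (swapY2X2On hU hg))

end CommuteAux

open CommuteAux

/-- The `x`-part of `L₁`: `A₁ = ∂ₓ² − (2/x)∂ₓ`. -/
noncomputable def A1 (f : ℝ × ℝ → ℝ) (p : ℝ × ℝ) : ℝ :=
  pdx (pdx f) p - 2 / p.1 * pdx f p

namespace CommuteAux

lemma contDiffOn_coeff {U : Set (ℝ × ℝ)} (hU0 : ∀ p ∈ U, p.1 ≠ 0) (c : ℝ) (k : ℕ) :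
    ContDiffOn ℝ ∞ (fun q : ℝ × ℝ => c / q.1 ^ k) U :=
  contDiffOn_const.div (contDiff_fst.contDiffOn.pow k) fun q hq => pow_ne_zero k (hU0 q hq)

/-- `A₁` commutes with `M₁` (a 1-D fact applied on horizontal slices). -/
lemma factA {U : Set (ℝ × ℝ)} (hU : IsOpen U) (hU0 : ∀ p ∈ U, p.1 ≠ 0) {f : ℝ × ℝ → ℝ}
    (hf : ContDiffOn ℝ ∞ f U) : ∀ p ∈ U, A1 (M1 f) p = M1 (A1 f) p := by
  intro p hp
  have hop : IsOpen {t : ℝ | (t, p.2) ∈ U} :=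
    hU.preimage (continuous_id.prodMk continuous_const)
  have h0 : ∀ t ∈ {t : ℝ | (t, p.2) ∈ U}, t ≠ 0 := fun t ht => hU0 (t, p.2) ht
  have hslice : ContDiffOn ℝ ∞ (fun t => f (t, p.2)) {t : ℝ | (t, p.2) ∈ U} :=
    hf.comp ((contDiff_id.prodMk contDiff_const).contDiffOn) fun t ht => ht
  exact oneD_comm hop h0 hslice p.1 hp

/-- `A₁` commutes with `K₁`. -/
lemma factB {U : Set (ℝ × ℝ)} (hU : IsOpen U) (hU0 : ∀ p ∈ U, p.1 ≠ 0) {f : ℝ × ℝ → ℝ}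
    (hf : ContDiffOn ℝ ∞ f U) : ∀ p ∈ U, A1 (K1 f) p = K1 (A1 f) p := by
  have Sx := contDiffOn_pdx hU hf
  have Sxx := contDiffOn_pdx hU Sx
  have hc : ContDiffOn ℝ ∞ (fun q : ℝ × ℝ => 2 / q.1 ^ 1) U := contDiffOn_coeff hU0 2 1
  have hcg : ContDiffOn ℝ ∞ (fun q : ℝ × ℝ => 2 / q.1 * pdx f q) U := by
    have := hc.mul Sx
    exact this.congr fun q hq => by norm_num
  have e1 : EqOn (pdy (A1 f)) (fun q => pdy (pdx (pdx f)) q - 2 / q.1 * pdy (pdx f) q) U := by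
    intro p hp
    have h1 : pdy (A1 f) p = pdy (pdx (pdx f)) p - pdy (fun q => 2 / q.1 * pdx f q) p :=
      pdy_subOn hU Sxx hcg hp
    have h2 : pdy (fun q => 2 / q.1 * pdx f q) p = 2 / p.1 * pdy (pdx f) p :=
      pdy_cmulOn hU (fun x => 2 / x) Sx hp
    show pdy (A1 f) p = pdy (pdx (pdx f)) p - 2 / p.1 * pdy (pdx f) p
    rw [h1, h2]
  have Syxx := contDiffOn_pdy hU Sxx
  have Syx := contDiffOn_pdy hU Sx
  have hcg' : ContDiffOn ℝ ∞ (fun q : ℝ × ℝ => 2 / q.1 * pdy (pdx f) q) U := by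
    have := hc.mul Syx
    exact this.congr fun q hq => by norm_num
  have e2 : EqOn (pdy (pdy (A1 f)))
      (fun q => pdy (pdy (pdx (pdx f))) q - 2 / q.1 * pdy (pdy (pdx f)) q) U := by
    intro p hp
    have h0' := pdy_congrOn hU e1 hp
    have h1 : pdy (fun q => pdy (pdx (pdx f)) q - 2 / q.1 * pdy (pdx f) q) p
        = pdy (pdy (pdx (pdx f))) p - pdy (fun q => 2 / q.1 * pdy (pdx f) q) p :=
      pdy_subOn hU Syxx hcg' hp
    have h2 : pdy (fun q => 2 / q.1 * pdy (pdx f) q) p = 2 / p.1 * pdy (pdy (pdx f)) p :=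
      pdy_cmulOn hU (fun x => 2 / x) Syx hp
    show pdy (pdy (A1 f)) p = pdy (pdy (pdx (pdx f))) p - 2 / p.1 * pdy (pdy (pdx f)) p
    rw [h0', h1, h2]
  intro p hp
  show pdx (pdx (pdy (pdy f))) p - 2 / p.1 * pdx (pdy (pdy f)) p = pdy (pdy (A1 f)) p
  simp only [e2 hp, swapY2X2On hU hf hp, swapY2On hU hf hp]

/-- `M₁` commutes with `K₁`. -/
lemma factC {U : Set (ℝ × ℝ)} (hU : IsOpen U) (hU0 : ∀ p ∈ U, p.1 ≠ 0) {f : ℝ × ℝ → ℝ}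
    (hf : ContDiffOn ℝ ∞ f U) : ∀ p ∈ U, M1 (K1 f) p = K1 (M1 f) p := by
  have Sx := contDiffOn_pdx hU hf
  have Sxx := contDiffOn_pdx hU Sx
  have Sxxx := contDiffOn_pdx hU Sxx
  have hc1 : ContDiffOn ℝ ∞ (fun q : ℝ × ℝ => 3 / q.1 ^ 1) U := contDiffOn_coeff hU0 3 1
  have hc2 : ContDiffOn ℝ ∞ (fun q : ℝ × ℝ => 3 / q.1 ^ 2) U := contDiffOn_coeff hU0 3 2
  have hB : ContDiffOn ℝ ∞ (fun q : ℝ × ℝ => 3 / q.1 * pdx (pdx f) q) U := by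
    have := hc1.mul Sxx
    exact this.congr fun q hq => by norm_num
  have hC : ContDiffOn ℝ ∞ (fun q : ℝ × ℝ => 3 / q.1 ^ 2 * pdx f q) U := hc2.mul Sx
  have hG : ContDiffOn ℝ ∞
      (fun q : ℝ × ℝ => pdx (pdx (pdx f)) q - 3 / q.1 * pdx (pdx f) q) U := Sxxx.sub hB
  have e1 : EqOn (pdy (M1 f))
      (fun q => pdy (pdx (pdx (pdx f))) q - 3 / q.1 * pdy (pdx (pdx f)) q
        + 3 / q.1 ^ 2 * pdy (pdx f) q) U := by
    intro p hp
    have h1 : pdy (M1 f) p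
        = pdy (fun q => pdx (pdx (pdx f)) q - 3 / q.1 * pdx (pdx f) q) p
          + pdy (fun q => 3 / q.1 ^ 2 * pdx f q) p :=
      pdy_addOn hU hG hC hp
    have h2 : pdy (fun q => pdx (pdx (pdx f)) q - 3 / q.1 * pdx (pdx f) q) p
        = pdy (pdx (pdx (pdx f))) p - pdy (fun q => 3 / q.1 * pdx (pdx f) q) p :=
      pdy_subOn hU Sxxx hB hp
    have h3 : pdy (fun q => 3 / q.1 * pdx (pdx f) q) p = 3 / p.1 * pdy (pdx (pdx f)) p :=
      pdy_cmulOn hU (fun x => 3 / x) Sxx hp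
    have h4 : pdy (fun q => 3 / q.1 ^ 2 * pdx f q) p = 3 / p.1 ^ 2 * pdy (pdx f) p :=
      pdy_cmulOn hU (fun x => 3 / x ^ 2) Sx hp
    show pdy (M1 f) p = pdy (pdx (pdx (pdx f))) p - 3 / p.1 * pdy (pdx (pdx f)) p
      + 3 / p.1 ^ 2 * pdy (pdx f) p
    rw [h1, h2, h3, h4]
  have Syxxx := contDiffOn_pdy hU Sxxx
  have Syxx := contDiffOn_pdy hU Sxx
  have Syx := contDiffOn_pdy hU Sx
  have hB' : ContDiffOn ℝ ∞ (fun q : ℝ × ℝ => 3 / q.1 * pdy (pdx (pdx f)) q) U := by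
    have := hc1.mul Syxx
    exact this.congr fun q hq => by norm_num
  have hC' : ContDiffOn ℝ ∞ (fun q : ℝ × ℝ => 3 / q.1 ^ 2 * pdy (pdx f) q) U := hc2.mul Syx
  have hG' : ContDiffOn ℝ ∞
      (fun q : ℝ × ℝ => pdy (pdx (pdx (pdx f))) q - 3 / q.1 * pdy (pdx (pdx f)) q) U :=
    Syxxx.sub hB'
  have e2 : EqOn (pdy (pdy (M1 f)))
      (fun q => pdy (pdy (pdx (pdx (pdx f)))) q - 3 / q.1 * pdy (pdy (pdx (pdx f))) q
        + 3 / q.1 ^ 2 * pdy (pdy (pdx f)) q) U := by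
    intro p hp
    have h0' := pdy_congrOn hU e1 hp
    have h1 : pdy (fun q => pdy (pdx (pdx (pdx f))) q - 3 / q.1 * pdy (pdx (pdx f)) q
        + 3 / q.1 ^ 2 * pdy (pdx f) q) p
        = pdy (fun q => pdy (pdx (pdx (pdx f))) q - 3 / q.1 * pdy (pdx (pdx f)) q) p
          + pdy (fun q => 3 / q.1 ^ 2 * pdy (pdx f) q) p :=
      pdy_addOn hU hG' hC' hp
    have h2 : pdy (fun q => pdy (pdx (pdx (pdx f))) q - 3 / q.1 * pdy (pdx (pdx f)) q) p
        = pdy (pdy (pdx (pdx (pdx f)))) p - pdy (fun q => 3 / q.1 * pdy (pdx (pdx f)) q) p :=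
      pdy_subOn hU Syxxx hB' hp
    have h3 : pdy (fun q => 3 / q.1 * pdy (pdx (pdx f)) q) p
        = 3 / p.1 * pdy (pdy (pdx (pdx f))) p :=
      pdy_cmulOn hU (fun x => 3 / x) Syxx hp
    have h4 : pdy (fun q => 3 / q.1 ^ 2 * pdy (pdx f) q) p = 3 / p.1 ^ 2 * pdy (pdy (pdx f)) p :=
      pdy_cmulOn hU (fun x => 3 / x ^ 2) Syx hp
    show pdy (pdy (M1 f)) p = pdy (pdy (pdx (pdx (pdx f)))) p
      - 3 / p.1 * pdy (pdy (pdx (pdx f))) p + 3 / p.1 ^ 2 * pdy (pdy (pdx f)) p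
    rw [h0', h1, h2, h3, h4]
  intro p hp
  show pdx (pdx (pdx (pdy (pdy f)))) p - 3 / p.1 * pdx (pdx (pdy (pdy f))) p
      + 3 / p.1 ^ 2 * pdx (pdy (pdy f)) p = pdy (pdy (M1 f)) p
  simp only [e2 hp, swapY2X3On hU hf hp, swapY2X2On hU hf hp, swapY2On hU hf hp]

/-- Additivity of `M₁` on smooth functions. -/
lemma M1_addOn {U : Set (ℝ × ℝ)} (hU : IsOpen U) {g h : ℝ × ℝ → ℝ}
    (hg : ContDiffOn ℝ ∞ g U) (hh : ContDiffOn ℝ ∞ h U) :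
    ∀ p ∈ U, M1 (fun q => g q + h q) p = M1 g p + M1 h p := by
  have e1 := pdx_addOn hU hg hh
  have e2 : EqOn (pdx (pdx (fun q => g q + h q)))
      (fun q => pdx (pdx g) q + pdx (pdx h) q) U :=
    (pdx_congrOn hU e1).trans (pdx_addOn hU (contDiffOn_pdx hU hg) (contDiffOn_pdx hU hh))
  have e3 : EqOn (pdx (pdx (pdx (fun q => g q + h q))))
      (fun q => pdx (pdx (pdx g)) q + pdx (pdx (pdx h)) q) U :=
    (pdx_congrOn hU e2).trans (pdx_addOn hU (contDiffOn_pdx hU (contDiffOn_pdx hU hg))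
      (contDiffOn_pdx hU (contDiffOn_pdx hU hh)))
  intro p hp
  show pdx (pdx (pdx (fun q => g q + h q))) p - 3 / p.1 * pdx (pdx (fun q => g q + h q)) p
      + 3 / p.1 ^ 2 * pdx (fun q => g q + h q) p = M1 g p + M1 h p
  simp only [e3 hp, e2 hp, e1 hp, M1]
  ring

/-- Additivity of `K₁` on smooth functions. -/
lemma K1_addOn {U : Set (ℝ × ℝ)} (hU : IsOpen U) {g h : ℝ × ℝ → ℝ}
    (hg : ContDiffOn ℝ ∞ g U) (hh : ContDiffOn ℝ ∞ h U) :
    ∀ p ∈ U, K1 (fun q => g q + h q) p = K1 g p + K1 h p := by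
  have e1 := pdy_addOn hU hg hh
  have e2 : EqOn (pdy (pdy (fun q => g q + h q)))
      (fun q => pdy (pdy g) q + pdy (pdy h) q) U :=
    (pdy_congrOn hU e1).trans (pdy_addOn hU (contDiffOn_pdy hU hg) (contDiffOn_pdy hU hh))
  intro p hp
  exact e2 hp

end CommuteAux

/-- The operators `L₁`, `M₁`, `K₁` pairwise commute on smooth functions on an
open set `U ⊆ {(x,y) : x ≠ 0}`, exhibiting an overcomplete commutative ring of
differential operators in two dimensions. -/
theorem L1_M1_K1_pairwise_commute (U : Set (ℝ × ℝ)) (hU : IsOpen U)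
    (hU0 : ∀ p ∈ U, p.1 ≠ 0)
    (f : ℝ × ℝ → ℝ) (hf : ContDiffOn ℝ (⊤ : ℕ∞) f U) :
    (∀ p ∈ U, L1 (M1 f) p = M1 (L1 f) p) ∧
    (∀ p ∈ U, L1 (K1 f) p = K1 (L1 f) p) ∧
    (∀ p ∈ U, M1 (K1 f) p = K1 (M1 f) p) := by
  have hf' : ContDiffOn ℝ ∞ f U := hf.of_le (by simp)
  have Sx := contDiffOn_pdx hU hf'
  have Sxx := contDiffOn_pdx hU Sx
  have hc : ContDiffOn ℝ ∞ (fun q : ℝ × ℝ => 2 / q.1 ^ 1) U := contDiffOn_coeff hU0 2 1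
  have hcg : ContDiffOn ℝ ∞ (fun q : ℝ × ℝ => 2 / q.1 * pdx f q) U := by
    have := hc.mul Sx
    exact this.congr fun q hq => by norm_num
  have hA1 : ContDiffOn ℝ ∞ (A1 f) U := Sxx.sub hcg
  have hK1 : ContDiffOn ℝ ∞ (K1 f) U := contDiffOn_pdy hU (contDiffOn_pdy hU hf')
  have fa := CommuteAux.factA hU hU0 hf'
  have fb := CommuteAux.factB hU hU0 hf'
  have fc := CommuteAux.factC hU hU0 hf'
  have madd := CommuteAux.M1_addOn hU hA1 hK1
  have kadd := CommuteAux.K1_addOn hU hA1 hK1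
  refine ⟨?_, ?_, fc⟩
  · intro p hp
    have h1 : M1 (L1 f) p = M1 (fun q => A1 f q + K1 f q) p := rfl
    have h2 : L1 (M1 f) p = A1 (M1 f) p + K1 (M1 f) p := rfl
    rw [h2, h1, madd p hp, fa p hp, ← fc p hp]
  · intro p hp
    have h1 : K1 (L1 f) p = K1 (fun q => A1 f q + K1 f q) p := rfl
    have h2 : L1 (K1 f) p = A1 (K1 f) p + K1 (K1 f) p := rfl
    rw [h2, h1, kadd p hp, fb p hp]
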